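/- arXiv:2504.12465 — 4 statements merged into one kernel-verified Lean document; each statement's English description precedes it below -/
import Mathlib

section
/- Let K be a field, R = K[x₁,…,x_r] with r ≥ 1, and let m ≥ n ≥ 3. Let G ∈ R^{n×1}, A ∈ R^{m×n} with block decomposition A = (A₁ // A₂) (A₁ the first n rows), and B ∈ R^{n×m} with block decomposition B = (B₁ | B₂) (B₁ the first n columns). Let F = A·G and suppose ⟨F⟩ = ⟨G⟩ and that W := B·A − E_n satisfies W·G = O_{n×1}. If det(E_n + W − B₂·A₂) is a nonzero irreducible element of R, then there exists a left regular matrix A' ∈ R^{m×n} over R with F = A'·G. -/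
/-- The first `n` rows of a matrix `A ∈ R^{m×n}` (requires `n ≤ m`). -/
def rowsTop {α : Type*} {m n : ℕ} (A : Matrix (Fin m) (Fin n) α) (h : n ≤ m) :
    Matrix (Fin n) (Fin n) α :=
  A.submatrix (Fin.castLE h) id

/-- The last `m - n` rows of a matrix `A ∈ R^{m×n}`. -/
def rowsBot {α : Type*} {m n : ℕ} (A : Matrix (Fin m) (Fin n) α) :
    Matrix (Fin (m - n)) (Fin n) α :=
  A.submatrix (fun k => ⟨n + k.1, by have := k.2; omega⟩) id

/-- The first `n` columns of a matrix `B ∈ R^{n×m}` (requires `n ≤ m`). -/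
def colsLeft {α : Type*} {m n : ℕ} (B : Matrix (Fin n) (Fin m) α) (h : n ≤ m) :
    Matrix (Fin n) (Fin n) α :=
  B.submatrix id (Fin.castLE h)

/-- The last `m - n` columns of a matrix `B ∈ R^{n×m}`. -/
def colsRight {α : Type*} {m n : ℕ} (B : Matrix (Fin n) (Fin m) α) :
    Matrix (Fin n) (Fin (m - n)) α :=
  B.submatrix id (fun k => ⟨n + k.1, by have := k.2; omega⟩)

/-- `R = K[x₁,…,x_r]`, `m ≥ n ≥ 3`, `G ∈ R^{n×1}`,
`A = (A₁ // A₂) ∈ R^{m×n}`, `B = (B₁ | B₂) ∈ R^{n×m}`, `F = A·G` with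
`⟨F⟩ = ⟨G⟩`, and `W := B·A − E_n` satisfies `W·G = 0`.  If
`det(E_n + W − B₂·A₂)` is a nonzero irreducible element of `R`, then `F = A'·G`
for some left regular matrix `A' ∈ R^{m×n}`. -/
theorem stmt6 {K : Type*} [Field K] {r m n : ℕ} (hr : 1 ≤ r) (hn : 3 ≤ n) (hnm : n ≤ m)
    (G : Matrix (Fin n) (Fin 1) (MvPolynomial (Fin r) K))
    (A : Matrix (Fin m) (Fin n) (MvPolynomial (Fin r) K))
    (B : Matrix (Fin n) (Fin m) (MvPolynomial (Fin r) K))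
    (F : Matrix (Fin m) (Fin 1) (MvPolynomial (Fin r) K)) (hF : F = A * G)
    (hgen : Ideal.span (Set.range fun i => F i 0) = Ideal.span (Set.range fun i => G i 0))
    (W : Matrix (Fin n) (Fin n) (MvPolynomial (Fin r) K)) (hW : W = B * A - 1)
    (hWG : W * G = 0)
    (hne : (1 + W - colsRight B * rowsBot A).det ≠ 0)
    (hirr : Irreducible (1 + W - colsRight B * rowsBot A).det) :
    ∃ A' : Matrix (Fin m) (Fin n) (MvPolynomial (Fin r) K),
      (∃ B' : Matrix (Fin n) (Fin m) (MvPolynomial (Fin r) K), B' * A' = 1) ∧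
      F = A' * G := by

  classical
  -- split a sum over `Fin m` into the first `n` and the last `m - n` indices
  have hm : m = n + (m - n) := by omega
  have sum_split : ∀ (f : Fin m → MvPolynomial (Fin r) K),
      ∑ k, f k = (∑ i : Fin n, f (Fin.castLE hnm i)) +
        ∑ j : Fin (m - n), f ⟨n + j.1, by omega⟩ := by
    intro f
    rw [← (finCongr hm.symm).sum_comp f, Fin.sum_univ_add]
    congr 1 <;>
      exact Finset.sum_congr rfl fun i _ => congrArg f (Fin.ext (by simp))
  set B₁ := colsLeft B hnm with hB₁
  set A₁ := rowsTop A hnm with hA₁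
  have blk : B * A = B₁ * A₁ + colsRight B * rowsBot A := by
    ext i j
    simp only [Matrix.mul_apply, Matrix.add_apply, hB₁, hA₁, colsLeft, colsRight, rowsTop,
      rowsBot, Matrix.submatrix_apply, id_eq]
    rw [sum_split fun k => B i k * A k j]
  have hBA : (1 : Matrix (Fin n) (Fin n) (MvPolynomial (Fin r) K)) + W = B * A := by
    rw [hW]; abel
  have key : 1 + W - colsRight B * rowsBot A = B₁ * A₁ := by
    rw [hBA, blk]; abel
  have hdet : (1 + W - colsRight B * rowsBot A).det = B₁.det * A₁.det := by
    rw [key, Matrix.det_mul]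
  rcases hirr.isUnit_or_isUnit hdet with hB1 | hA1
  · -- `B₁` is invertible: take `A' = A - Δ` with `Δ` the column block `(B₁⁻¹ W // 0)`
    have hinv : B₁ * B₁⁻¹ = 1 := Matrix.mul_nonsing_inv B₁ hB1
    set Δ : Matrix (Fin m) (Fin n) (MvPolynomial (Fin r) K) :=
      fun k l => if h : (k : ℕ) < n then (B₁⁻¹ * W) ⟨k, h⟩ l else 0 with hΔdef
    have hBΔ : B * Δ = W := by
      ext i j
      rw [Matrix.mul_apply, sum_split fun k => B i k * Δ k j]
      have h2 : ∑ j' : Fin (m - n),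
          B i ⟨n + j'.1, by omega⟩ * Δ ⟨n + j'.1, by omega⟩ j = 0 := by
        refine Finset.sum_eq_zero fun j' _ => ?_
        have : ¬ ((⟨n + j'.1, by omega⟩ : Fin m) : ℕ) < n := by simp
        rw [hΔdef]
        simp only [dif_neg this, mul_zero]
      rw [h2, add_zero]
      have h1 : ∑ i' : Fin n, B i (Fin.castLE hnm i') * Δ (Fin.castLE hnm i') j
          = (B₁ * (B₁⁻¹ * W)) i j := by
        rw [Matrix.mul_apply]
        refine Finset.sum_congr rfl fun i' _ => ?_
        have hlt : ((Fin.castLE hnm i') : ℕ) < n := i'.2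
        rw [hΔdef]
        simp only [dif_pos hlt]
        rfl
      rw [h1, ← Matrix.mul_assoc, hinv, Matrix.one_mul]
    have hΔG : Δ * G = 0 := by
      ext k j
      rw [Matrix.mul_apply]
      by_cases h : (k : ℕ) < n
      · have : ∑ l, Δ k l * G l j = (B₁⁻¹ * W * G) ⟨k, h⟩ j := by
          rw [Matrix.mul_apply]
          refine Finset.sum_congr rfl fun l _ => ?_
          rw [hΔdef]; simp only [dif_pos h]
        rw [this, Matrix.mul_assoc, hWG, Matrix.mul_zero]
        simp
      · have hz : ∑ l, Δ k l * G l j = 0 :=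
          Finset.sum_eq_zero fun l _ => by rw [hΔdef]; simp only [dif_neg h, zero_mul]
        rw [hz]
        simp
    refine ⟨A - Δ, ⟨B, ?_⟩, ?_⟩
    · rw [Matrix.mul_sub, hBΔ, ← hBA]; abel
    · rw [Matrix.sub_mul, hΔG, sub_zero, hF]
  · -- `A₁` is invertible: `A` itself is left regular
    have hinv : A₁⁻¹ * A₁ = 1 := Matrix.nonsing_inv_mul A₁ hA1
    refine ⟨A, ⟨Matrix.of fun i k => if h : (k : ℕ) < n then A₁⁻¹ i ⟨k, h⟩ else 0, ?_⟩, hF⟩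
    ext i j : 1
    simp only [Matrix.mul_apply, Matrix.of_apply]
    rw [sum_split fun k => (if h : (k : ℕ) < n then A₁⁻¹ i ⟨k, h⟩ else 0) * A k j]
    have h2 : ∑ j' : Fin (m - n),
        (if h : ((⟨n + j'.1, by omega⟩ : Fin m) : ℕ) < n then A₁⁻¹ i ⟨_, h⟩ else 0)
          * A ⟨n + j'.1, by omega⟩ j = 0 := by
      refine Finset.sum_eq_zero fun j' _ => ?_
      have : ¬ ((⟨n + j'.1, by omega⟩ : Fin m) : ℕ) < n :=
        Nat.not_lt.2 (Nat.le_add_right _ _)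
      simp only [dif_neg this, zero_mul]
    rw [h2, add_zero]
    have h1 : ∑ i' : Fin n,
        (if h : ((Fin.castLE hnm i') : ℕ) < n then A₁⁻¹ i ⟨_, h⟩ else 0)
          * A (Fin.castLE hnm i') j = (A₁⁻¹ * A₁) i j := by
      rw [Matrix.mul_apply]
      refine Finset.sum_congr rfl fun i' _ => ?_
      have hlt : ((Fin.castLE hnm i') : ℕ) < n := i'.2
      simp only [dif_pos hlt]
      rfl
    rw [h1, hinv]
end

section
/- Let K be a field, R = K[x₁,…,x_r] with r ≥ 1, and let m ≥ n ≥ 3. Let G ∈ R^{n×1}, and let B ∈ R^{n×m}, A ∈ R^{m×n} satisfy (B·A − E_n)·G = O_{n×1}. Write B = (B₁ | B₂) (B₁ the first n columns) and A = (A₁ // A₂) (A₁ the first n rows). If det(B₁·A₁) is a nonzero irreducible element of R, then there exists a left regular matrix A' ∈ R^{m×n} over R with A·G = A'·G. -/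
lemma sum_fin_le {M : Type*} [AddCommMonoid M] {m n : ℕ} (h : n ≤ m) (f : Fin m → M)
    (hf : ∀ k : Fin m, n ≤ (k : ℕ) → f k = 0) :
    ∑ k : Fin m, f k = ∑ k : Fin n, f (Fin.castLE h k) := by
  classical
  have key : ∀ k : Fin m, f k = (fun i : ℕ => if hi : i < m then f ⟨i, hi⟩ else 0) (k : ℕ) := by
    intro k; simp [k.2]
  calc ∑ k : Fin m, f k
      = ∑ k : Fin m, (fun i : ℕ => if hi : i < m then f ⟨i, hi⟩ else 0) (k : ℕ) := by
        exact Finset.sum_congr rfl fun k _ => key k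
    _ = ∑ i ∈ Finset.range m, (if hi : i < m then f ⟨i, hi⟩ else 0) :=
        Fin.sum_univ_eq_sum_range (fun i => if hi : i < m then f ⟨i, hi⟩ else 0) m
    _ = ∑ i ∈ Finset.range n, (if hi : i < m then f ⟨i, hi⟩ else 0) := by
        refine (Finset.sum_subset (Finset.range_subset_range.2 h) ?_).symm
        intro i hi hni
        simp only [Finset.mem_range] at hi hni
        rw [dif_pos hi]
        exact hf ⟨i, hi⟩ (le_of_not_gt hni)
    _ = ∑ k : Fin n, (fun i : ℕ => if hi : i < m then f ⟨i, hi⟩ else 0) (k : ℕ) :=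
        (Fin.sum_univ_eq_sum_range (fun i => if hi : i < m then f ⟨i, hi⟩ else 0) n).symm
    _ = ∑ k : Fin n, f (Fin.castLE h k) := by
        refine Finset.sum_congr rfl fun k _ => ?_
        simp only [dif_pos (lt_of_lt_of_le k.2 h)]
        rfl

/-- `R = K[x₁,…,x_r]`, `m ≥ n ≥ 3`, `G ∈ R^{n×1}`, and
`B ∈ R^{n×m}`, `A ∈ R^{m×n}` with `(B·A − E_n)·G = 0`.  If `det(B₁·A₁)` is a
nonzero irreducible element of `R`, then `A·G = A'·G` for some left regular
matrix `A' ∈ R^{m×n}`. -/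
theorem stmt7 {K : Type*} [Field K] {r m n : ℕ} (hr : 1 ≤ r) (hn : 3 ≤ n) (hnm : n ≤ m)
    (G : Matrix (Fin n) (Fin 1) (MvPolynomial (Fin r) K))
    (B : Matrix (Fin n) (Fin m) (MvPolynomial (Fin r) K))
    (A : Matrix (Fin m) (Fin n) (MvPolynomial (Fin r) K))
    (hBA : (B * A - 1) * G = 0)
    (hne : (colsLeft B hnm * rowsTop A hnm).det ≠ 0)
    (hirr : Irreducible (colsLeft B hnm * rowsTop A hnm).det) :
    ∃ A' : Matrix (Fin m) (Fin n) (MvPolynomial (Fin r) K),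
      (∃ B' : Matrix (Fin n) (Fin m) (MvPolynomial (Fin r) K), B' * A' = 1) ∧
      A * G = A' * G := by

  have hdet : (colsLeft B hnm * rowsTop A hnm).det
      = (colsLeft B hnm).det * (rowsTop A hnm).det := Matrix.det_mul _ _
  rcases hirr.isUnit_or_isUnit hdet with hB1 | hA1
  · -- det B₁ is a unit: B has right inverse C, take A' = A + C * (1 - B * A)
    set D := (colsLeft B hnm)⁻¹ with hD
    have hBD : colsLeft B hnm * D = 1 := Matrix.mul_nonsing_inv _ hB1
    set C : Matrix (Fin m) (Fin n) (MvPolynomial (Fin r) K) :=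
      fun k j => if hk : (k : ℕ) < n then D ⟨k, hk⟩ j else 0 with hC
    have hBC : B * C = 1 := by
      refine Matrix.ext fun i j => ?_
      have hsum : (∑ k : Fin m, B i k * C k j)
          = ∑ k : Fin n, B i (Fin.castLE hnm k) * C (Fin.castLE hnm k) j :=
        sum_fin_le hnm (fun k => B i k * C k j)
          (fun k hk => by simp [hC, not_lt.2 hk])
      rw [Matrix.mul_apply, hsum, ← hBD, Matrix.mul_apply]
      refine Finset.sum_congr rfl fun k _ => ?_
      have h1 : C (Fin.castLE hnm k) j = D k j := by
        simp [hC, k.2]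
      rw [h1]; rfl
    have h0 : (1 - B * A) * G = 0 := by
      have h2 : (1 - B * A) * G = (-(B * A - 1)) * G := by rw [neg_sub]
      rw [h2, Matrix.neg_mul, hBA, neg_zero]
    refine ⟨A + C * (1 - B * A), ⟨B, ?_⟩, ?_⟩
    · rw [Matrix.mul_add, ← Matrix.mul_assoc, hBC, Matrix.one_mul]
      abel
    · rw [Matrix.add_mul, Matrix.mul_assoc, h0, Matrix.mul_zero, add_zero]
  · -- det A₁ is a unit: A itself is left regular
    refine ⟨A, ⟨fun i k => if hk : (k : ℕ) < n then (rowsTop A hnm)⁻¹ i ⟨k, hk⟩ else 0, ?_⟩, rfl⟩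
    refine Matrix.ext fun i j => ?_
    have hsum : (∑ k : Fin m,
          (if hk : (k : ℕ) < n then (rowsTop A hnm)⁻¹ i ⟨k, hk⟩ else 0) * A k j)
        = ∑ k : Fin n,
          (if hk : ((Fin.castLE hnm k : Fin m) : ℕ) < n then
              (rowsTop A hnm)⁻¹ i ⟨(Fin.castLE hnm k : Fin m), hk⟩ else 0)
            * A (Fin.castLE hnm k) j :=
      sum_fin_le hnm _ (fun k hk => by simp [not_lt.2 hk])
    show (∑ k : Fin m,
          (if hk : (k : ℕ) < n then (rowsTop A hnm)⁻¹ i ⟨k, hk⟩ else 0) * A k j)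
        = (1 : Matrix (Fin n) (Fin n) (MvPolynomial (Fin r) K)) i j
    rw [hsum, ← Matrix.nonsing_inv_mul _ hA1, Matrix.mul_apply]
    refine Finset.sum_congr rfl fun k _ => ?_
    simp only [Fin.coe_castLE, Fin.eta, dif_pos k.2]
    rfl
end

section
/- Let K be a field and let n ≥ 1, r ≥ 1, D ≥ 0 be integers. Let S be the polynomial ring over K in the variables c_{α,i,j} (indexed by multi-indices α ∈ ℕ^r with |α| ≤ D and indices 1 ≤ i, j ≤ n) together with the variables x₁,…,x_r. Let M be the n×n matrix over S whose (i,j) entry is Σ_{|α| ≤ D} c_{α,i,j}·x^α (where x^α = x₁^{α₁}⋯x_r^{α_r}). Then det M is an irreducible element of S. -/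
/-- Multi-indices `α ∈ ℕ^r` with `|α| ≤ D` (each component is then `≤ D`,
so we encode components in `Fin (D+1)`). -/
abbrev MIdx (r D : ℕ) := {α : Fin r → Fin (D + 1) // (∑ i, (α i : ℕ)) ≤ D}

open MvPolynomial

namespace Stmt8Aux

variable {K : Type*} [Field K] {n : ℕ}

/-- the exponent multiset of the permutation monomial -/
noncomputable def mon {n : ℕ} (σ : Equiv.Perm (Fin n)) : (Fin n × Fin n) →₀ ℕ :=
  ∑ i, Finsupp.single (σ i, i) 1

lemma mon_apply (σ : Equiv.Perm (Fin n)) (p : Fin n × Fin n) :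
    mon σ p = if σ p.2 = p.1 then 1 else 0 := by
  classical
  obtain ⟨a, b⟩ := p
  rw [mon, Finset.sum_apply']
  rw [Finset.sum_eq_single b]
  · simp [Finsupp.single_apply, Prod.ext_iff]
  · intro c _ hcb
    rw [Finsupp.single_apply, if_neg]
    simp only [Prod.mk.injEq, not_and]
    exact fun _ => hcb
  · simp

lemma mon_inj : Function.Injective (mon (n := n)) := by
  intro σ τ h
  apply Equiv.ext
  intro b
  have h1 : mon σ (σ b, b) = 1 := by simp [mon_apply]
  rw [h, mon_apply] at h1
  by_contra hne
  rw [if_neg (fun hc => hne hc.symm)] at h1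
  exact one_ne_zero h1.symm

lemma prod_X_eq (σ : Equiv.Perm (Fin n)) :
    (∏ i, (X (σ i, i) : MvPolynomial (Fin n × Fin n) K)) = monomial (mon σ) 1 := by
  rw [mon, monomial_sum_one]
  rfl

variable {K : Type*} [Field K] {n : ℕ}

noncomputable def gd (K : Type*) [Field K] (n : ℕ) : MvPolynomial (Fin n × Fin n) K :=
  Matrix.det (Matrix.of fun i j : Fin n => X (i, j))

lemma gd_eq : gd K n = ∑ σ : Equiv.Perm (Fin n),
    monomial (mon σ) (((Equiv.Perm.sign σ : ℤ) : K)) := by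
  rw [gd, Matrix.det_apply']
  refine Finset.sum_congr rfl fun σ _ => ?_
  rw [show (∏ i, (Matrix.of fun i j : Fin n => (X (i, j) : MvPolynomial (Fin n × Fin n) K)) (σ i) i) = ∏ i, (X (σ i, i) : MvPolynomial (Fin n × Fin n) K) from rfl, prod_X_eq]
  rw [show ((Equiv.Perm.sign σ : ℤ) : MvPolynomial (Fin n × Fin n) K) = C ((Equiv.Perm.sign σ : ℤ) : K) from (map_intCast (C : K →+* MvPolynomial (Fin n × Fin n) K) _).symm, C_mul_monomial, mul_one]

lemma sign_cast_ne_zero (σ : Equiv.Perm (Fin n)) : ((Equiv.Perm.sign σ : ℤ) : K) ≠ 0 := by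
  rcases Int.units_eq_one_or (Equiv.Perm.sign σ) with h | h <;> rw [h] <;> simp

lemma coeff_gd (τ : Equiv.Perm (Fin n)) :
    coeff (mon τ) (gd K n) = ((Equiv.Perm.sign τ : ℤ) : K) := by
  classical
  rw [gd_eq, MvPolynomial.coeff_sum]
  rw [Finset.sum_eq_single τ]
  · rw [coeff_monomial, if_pos rfl]
  · intro σ _ hστ
    rw [coeff_monomial, if_neg (fun hc => hστ (mon_inj hc))]
  · simp

lemma mem_support_gd (τ : Equiv.Perm (Fin n)) : mon τ ∈ (gd K n).support := by
  rw [mem_support_iff, coeff_gd]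
  exact sign_cast_ne_zero τ

lemma support_gd_subset : (gd K n).support ⊆ Finset.univ.image (mon (n := n)) := by
  classical
  refine (gd_eq (K := K)).symm ▸ (MvPolynomial.support_sum).trans ?_
  intro m hm
  rw [Finset.mem_biUnion] at hm
  obtain ⟨σ, _, hσ⟩ := hm
  have := support_monomial_subset hσ
  rw [Finset.mem_singleton] at this
  subst this
  exact Finset.mem_image_of_mem _ (Finset.mem_univ σ)

lemma degreeOf_gd (u : Fin n × Fin n) : degreeOf u (gd K n) = 1 := by
  classical
  refine le_antisymm ?_ ?_
  · rw [degreeOf_le_iff]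
    intro m hm
    obtain ⟨σ, _, rfl⟩ := Finset.mem_image.mp (support_gd_subset hm)
    rw [mon_apply]
    split <;> simp
  · obtain ⟨a, b⟩ := u
    have hτb : (Equiv.swap a b) b = a := Equiv.swap_apply_right a b
    set τ : Equiv.Perm (Fin n) := Equiv.swap a b with hτ
    calc (1 : ℕ) = mon τ (a, b) := by rw [mon_apply]; simp [hτb]
    _ ≤ degreeOf (a, b) (gd K n) := by
        rw [degreeOf_eq_sup]
        exact Finset.le_sup (f := fun m => m (a, b)) (mem_support_gd (K := K) τ)

lemma support_gd_rowcol {v w : Fin n × Fin n} (hvw : v ≠ w) (h : v.1 = w.1 ∨ v.2 = w.2)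
    {m : (Fin n × Fin n) →₀ ℕ} (hm : m ∈ (gd K n).support) : m v = 0 ∨ m w = 0 := by
  classical
  obtain ⟨σ, _, rfl⟩ := Finset.mem_image.mp (support_gd_subset hm)
  by_contra hc
  push_neg at hc
  rw [mon_apply] at hc
  rw [mon_apply] at hc
  obtain ⟨h1, h2⟩ := hc
  have hv : σ v.2 = v.1 := by by_contra hx; rw [if_neg hx] at h1; exact h1 rfl
  have hw : σ w.2 = w.1 := by by_contra hx; rw [if_neg hx] at h2; exact h2 rfl
  apply hvw
  rcases h with h | h
  · have : v.2 = w.2 := σ.injective (by rw [hv, hw, h])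
    exact Prod.ext h this
  · exact Prod.ext (by rw [← hv, ← hw, h]) h

lemma constantCoeff_gd (hn : 1 ≤ n) : constantCoeff (gd K n) = 0 := by
  classical
  rw [constantCoeff_eq]
  by_contra hc
  have h0 : (0 : (Fin n × Fin n) →₀ ℕ) ∈ (gd K n).support := mem_support_iff.mpr hc
  obtain ⟨σ, _, hσ⟩ := Finset.mem_image.mp (support_gd_subset h0)
  have b : Fin n := ⟨0, hn⟩
  have : mon σ (σ b, b) = 1 := by rw [mon_apply]; simp
  rw [hσ] at this
  simp at this

lemma gd_ne_zero : gd K n ≠ 0 := fun h => by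
  have := mem_support_gd (K := K) (1 : Equiv.Perm (Fin n))
  rw [h] at this
  simp at this

lemma degreeOf_mul_eq {σ : Type*} [Fintype σ] [DecidableEq σ] (v : σ)
    {f g : MvPolynomial σ K} (hf : f ≠ 0) (hg : g ≠ 0) :
    degreeOf v (f * g) = degreeOf v f + degreeOf v g := by
  haveI : Nonempty σ := ⟨v⟩
  have hcard : Fintype.card σ ≠ 0 := Fintype.card_ne_zero
  obtain ⟨m, hm⟩ := Nat.exists_eq_succ_of_ne_zero hcard
  let e₀ : σ ≃ Fin (m + 1) := (Fintype.equivFin σ).trans (finCongr hm)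
  let e : σ ≃ Fin (m + 1) := e₀.trans (Equiv.swap (e₀ v) 0)
  have hev : e v = 0 := by simp [e, Equiv.swap_apply_left]
  have key : ∀ p : MvPolynomial σ K,
      degreeOf v p = ((finSuccEquiv K m) (rename e p)).natDegree := by
    intro p
    rw [natDegree_finSuccEquiv, ← hev, degreeOf_rename_of_injective e.injective]
  have hrf : rename (e : σ → Fin (m+1)) f ≠ 0 := fun h => hf ((rename_injective _ e.injective) (by simpa using h))
  have hrg : rename (e : σ → Fin (m+1)) g ≠ 0 := fun h => hg ((rename_injective _ e.injective) (by simpa using h))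
  have h1 : ((finSuccEquiv K m) (rename e f)) ≠ 0 :=
    fun h => hrf ((finSuccEquiv K m).injective (by simpa using h))
  have h2 : ((finSuccEquiv K m) (rename e g)) ≠ 0 :=
    fun h => hrg ((finSuccEquiv K m).injective (by simpa using h))
  rw [key, key, key, map_mul, map_mul, Polynomial.natDegree_mul h1 h2]

lemma not_mem_vars_of_degreeOf_eq_zero {σ : Type*} {v : σ} {p : MvPolynomial σ K}
    (h : degreeOf v p = 0) : v ∉ p.vars := by
  intro hv
  obtain ⟨d, hd, hvd⟩ := (mem_vars v).mp hv
  have h1 : d v ≤ 0 := h ▸ degreeOf_le_iff.mp h.le d hd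
  exact (Finsupp.mem_support_iff.mp hvd) (Nat.le_zero.mp h1)

lemma pderiv_eq_zero_of_degreeOf_eq_zero {σ : Type*} {v : σ} {p : MvPolynomial σ K}
    (h : degreeOf v p = 0) : pderiv v p = 0 :=
  pderiv_eq_zero_of_notMem_vars (not_mem_vars_of_degreeOf_eq_zero h)

lemma pderiv_pderiv_comm {σ : Type*} [DecidableEq σ] (v w : σ) (p : MvPolynomial σ K) :
    pderiv v (pderiv w p) = pderiv w (pderiv v p) := by
  rcases eq_or_ne v w with rfl | hvw
  · rfl
  · conv_lhs => rw [p.as_sum]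
    conv_rhs => rw [p.as_sum]
    rw [map_sum, map_sum, map_sum, map_sum]
    refine Finset.sum_congr rfl fun d _ => ?_
    rw [pderiv_monomial, pderiv_monomial, pderiv_monomial, pderiv_monomial]
    have h1 : (d - Finsupp.single w 1 : σ →₀ ℕ) v = d v := by
      rw [Finsupp.tsub_apply, Finsupp.single_apply, if_neg (fun h => hvw h.symm)]
      simp
    have h2 : (d - Finsupp.single v 1 : σ →₀ ℕ) w = d w := by
      rw [Finsupp.tsub_apply, Finsupp.single_apply, if_neg (fun h => hvw h)]
      simp
    rw [h1, h2, tsub_right_comm]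
    ring_nf

lemma pderiv_ne_zero_of_degreeOf_eq_one {σ : Type*} [DecidableEq σ] {v : σ}
    {p : MvPolynomial σ K} (h : degreeOf v p = 1) : pderiv v p ≠ 0 := by
  -- find a monomial with exponent 1 at v
  have hsup : p.support.sup (fun m => m v) = 1 := by rw [← degreeOf_eq_sup, h]
  have hne : p.support.Nonempty := by
    by_contra hc
    rw [Finset.not_nonempty_iff_eq_empty] at hc
    rw [hc] at hsup
    simp at hsup
  obtain ⟨m₀, hm₀, hm₀v⟩ := Finset.exists_mem_eq_sup p.support hne (fun m => m v)
  have hm1 : m₀ v = 1 := by rw [← hm₀v]; exact hsup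
  -- compute the coefficient of (m₀ - single v 1) in pderiv v p
  intro hzero
  have hco : coeff (m₀ - Finsupp.single v 1) (pderiv v p) = coeff m₀ p := by
    conv_lhs => rw [p.as_sum, map_sum]
    rw [coeff_sum]
    rw [Finset.sum_eq_single m₀]
    · rw [pderiv_monomial, coeff_monomial, if_pos rfl, hm1]
      simp
    · intro d hd hdm₀
      rw [pderiv_monomial, coeff_monomial]
      rcases Nat.eq_zero_or_pos (d v) with h0 | h1
      · rw [h0]; simp
      · rw [if_neg]
        intro hc
        apply hdm₀
        have hd1 : d v = 1 := le_antisymm (degreeOf_le_iff.mp (le_of_eq h) d hd) h1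
        have : d = d - Finsupp.single v 1 + Finsupp.single v 1 := by
          ext u
          rcases eq_or_ne u v with rfl | huv
          · simp [Finsupp.tsub_apply, hd1]
          · rw [Finsupp.add_apply, Finsupp.tsub_apply, Finsupp.single_apply, if_neg (fun hh : v = u => huv hh.symm)]
            simp
        have that : m₀ = m₀ - Finsupp.single v 1 + Finsupp.single v 1 := by
          ext u
          rcases eq_or_ne u v with rfl | huv
          · simp [Finsupp.tsub_apply, hm1]
          · rw [Finsupp.add_apply, Finsupp.tsub_apply, Finsupp.single_apply, if_neg (fun hh : v = u => huv hh.symm)]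
            simp
        rw [this, that, hc]
    · intro h'
      exact absurd hm₀ h'
  rw [hzero] at hco
  simp only [coeff_zero] at hco
  exact (mem_support_iff.mp hm₀) hco.symm

lemma pderiv_pderiv_gd {v w : Fin n × Fin n} (hvw : v ≠ w) (h : v.1 = w.1 ∨ v.2 = w.2) :
    pderiv v (pderiv w (gd K n)) = 0 := by
  classical
  conv_lhs => rw [(gd K n).as_sum]
  rw [map_sum, map_sum]
  refine Finset.sum_eq_zero fun m hm => ?_
  rw [pderiv_monomial, pderiv_monomial]
  rcases support_gd_rowcol hvw h hm with h0 | h0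
  · rcases Nat.eq_zero_or_pos (m w) with h1 | h1
    · rw [h1]; simp
    · have : (m - Finsupp.single w 1 : (Fin n × Fin n) →₀ ℕ) v = 0 := by
        rw [Finsupp.tsub_apply, h0]
        simp
      rw [this]
      simp
  · rw [h0]; simp

theorem gd_irreducible (hn : 1 ≤ n) : Irreducible (gd K n) := by
  classical
  constructor
  · intro hu
    have := hu.map (constantCoeff : MvPolynomial (Fin n × Fin n) K →+* K)
    rw [constantCoeff_gd hn] at this
    exact not_isUnit_zero this
  · intro f g hfg
    by_contra hcon
    push_neg at hcon
    obtain ⟨hf, hg⟩ := hcon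
    have hf0 : f ≠ 0 := fun h => gd_ne_zero (K := K) (n := n) (by rw [hfg, h, zero_mul])
    have hg0 : g ≠ 0 := fun h => gd_ne_zero (K := K) (n := n) (by rw [hfg, h, mul_zero])
    have hsum : ∀ u : Fin n × Fin n, degreeOf u f + degreeOf u g = 1 := by
      intro u
      rw [← degreeOf_mul_eq u hf0 hg0, ← hfg, degreeOf_gd]
    -- a nonunit nonzero polynomial has a variable of positive degree
    have hex : ∀ p : MvPolynomial (Fin n × Fin n) K, p ≠ 0 → ¬IsUnit p →
        ∃ u, degreeOf u p ≠ 0 := by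
      intro p hp0 hpu
      by_contra hc
      push_neg at hc
      have : p = C (coeff 0 p) := by
        apply MvPolynomial.ext
        intro m
        rcases eq_or_ne m 0 with rfl | hm
        · rw [coeff_C, if_pos rfl]
        · rw [coeff_C, if_neg (fun hh => hm hh.symm)]
          by_contra hcm
          obtain ⟨u, hu⟩ := Finsupp.ne_iff.mp hm
          have := degreeOf_le_iff.mp (le_of_eq (hc u)) m (mem_support_iff.mpr hcm)
          simp only [Finsupp.coe_zero, Pi.zero_apply] at hu
          omega
      apply hpu
      rw [this]
      refine (isUnit_iff_ne_zero.mpr ?_).map (C : K →+* MvPolynomial (Fin n × Fin n) K)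
      intro hc0
      exact hp0 (by rw [this, hc0, map_zero])
    obtain ⟨v, hv⟩ := hex f hf0 hf
    obtain ⟨w, hw⟩ := hex g hg0 hg
    have hvf : degreeOf v f = 1 := by have := hsum v; omega
    have hwg : degreeOf w g = 1 := by have := hsum w; omega
    have hvg : degreeOf v g = 0 := by have := hsum v; omega
    have hwf : degreeOf w f = 0 := by have := hsum w; omega
    -- cross contradiction
    have cross : ∀ v' w' : Fin n × Fin n, v'.1 = w'.1 ∨ v'.2 = w'.2 →
        degreeOf v' f = 1 → degreeOf v' g = 0 → degreeOf w' f = 0 → degreeOf w' g = 1 → False := by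
      intro v' w' hshare hv'f hv'g hw'f hw'g
      have hne : v' ≠ w' := fun h => by rw [h, hw'f] at hv'f; exact one_ne_zero hv'f.symm
      have e1 : pderiv w' f = 0 := pderiv_eq_zero_of_degreeOf_eq_zero hw'f
      have e2 : pderiv v' g = 0 := pderiv_eq_zero_of_degreeOf_eq_zero hv'g
      have key : pderiv v' (pderiv w' (gd K n)) = pderiv v' f * pderiv w' g := by
        rw [hfg, pderiv_mul, e1, zero_mul, zero_add, pderiv_mul,
          pderiv_pderiv_comm, e2, map_zero, mul_zero, add_zero]
      rw [pderiv_pderiv_gd hne hshare] at key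
      exact (mul_ne_zero (pderiv_ne_zero_of_degreeOf_eq_one hv'f)
        (pderiv_ne_zero_of_degreeOf_eq_one hw'g)) key.symm
    set u : Fin n × Fin n := (v.1, w.2) with hu
    rcases Nat.eq_zero_or_pos (degreeOf u f) with huf | huf
    · have hug : degreeOf u g = 1 := by have := hsum u; omega
      exact cross v u (Or.inl rfl) hvf hvg huf hug
    · have huf1 : degreeOf u f = 1 := by have := hsum u; omega
      have hug : degreeOf u g = 0 := by have := hsum u; omega
      exact cross u w (Or.inr rfl) huf1 hug hwf hwg

abbrev Big (r D n : ℕ) := (MIdx r D × Fin n × Fin n) ⊕ Fin r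

def a0 (r D : ℕ) : MIdx r D := ⟨fun _ => 0, by simp⟩

noncomputable def xp (K : Type*) [Field K] {r D n : ℕ} (α : MIdx r D) :
    MvPolynomial (Big r D n) K :=
  ∏ k, X (Sum.inr k) ^ (α.1 k : ℕ)

lemma xp_a0 : xp K (a0 r D) = (1 : MvPolynomial (Big r D n) K) := by
  rw [xp]
  refine Finset.prod_eq_one fun k _ => ?_
  simp [a0]

noncomputable def Epoly (K : Type*) [Field K] (r D n : ℕ) (i j : Fin n) :
    MvPolynomial (Big r D n) K :=
  ∑ α ∈ Finset.univ.erase (a0 r D), X (Sum.inl (α, i, j)) * xp K α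

noncomputable def Fmap (K : Type*) [Field K] (r D n : ℕ) :
    Big r D n → MvPolynomial (Big r D n) K :=
  Sum.elim
    (fun p => if p.1 = a0 r D then X (Sum.inl p) - Epoly K r D n p.2.1 p.2.2
      else X (Sum.inl p))
    (fun k => X (Sum.inr k))

noncomputable def Gmap (K : Type*) [Field K] (r D n : ℕ) :
    Big r D n → MvPolynomial (Big r D n) K :=
  Sum.elim
    (fun p => if p.1 = a0 r D then X (Sum.inl p) + Epoly K r D n p.2.1 p.2.2
      else X (Sum.inl p))
    (fun k => X (Sum.inr k))

variable {r D : ℕ}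

variable {r D : ℕ}

lemma Fmap_inl (α : MIdx r D) (i j : Fin n) : Fmap K r D n (Sum.inl (α, i, j)) =
    if α = a0 r D then X (Sum.inl (α, i, j)) - Epoly K r D n i j else X (Sum.inl (α, i, j)) := rfl

lemma Fmap_inr (k : Fin r) : Fmap K r D n (Sum.inr k) = X (Sum.inr k) := rfl

lemma Gmap_inl (α : MIdx r D) (i j : Fin n) : Gmap K r D n (Sum.inl (α, i, j)) =
    if α = a0 r D then X (Sum.inl (α, i, j)) + Epoly K r D n i j else X (Sum.inl (α, i, j)) := rfl

lemma Gmap_inr (k : Fin r) : Gmap K r D n (Sum.inr k) = X (Sum.inr k) := rfl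

lemma aeval_fix_Epoly (F : Big r D n → MvPolynomial (Big r D n) K)
    (h1 : ∀ α (hα : α ≠ a0 r D) (i j : Fin n), F (Sum.inl (α, i, j)) = X (Sum.inl (α, i, j)))
    (h2 : ∀ k, F (Sum.inr k) = X (Sum.inr k)) (i j : Fin n) :
    aeval F (Epoly K r D n i j) = Epoly K r D n i j := by
  rw [Epoly, map_sum]
  refine Finset.sum_congr rfl fun α hα => ?_
  rw [Finset.mem_erase] at hα
  rw [map_mul, aeval_X, h1 α hα.1, xp, map_prod]
  congr 1
  refine Finset.prod_congr rfl fun k _ => ?_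
  rw [map_pow, aeval_X, h2]

lemma aeval_Fmap_Epoly (i j : Fin n) :
    aeval (Fmap K r D n) (Epoly K r D n i j) = Epoly K r D n i j :=
  aeval_fix_Epoly _ (fun α hα i j => by rw [Fmap_inl, if_neg hα]) (fun k => Fmap_inr k) i j

lemma aeval_Gmap_Epoly (i j : Fin n) :
    aeval (Gmap K r D n) (Epoly K r D n i j) = Epoly K r D n i j :=
  aeval_fix_Epoly _ (fun α hα i j => by rw [Gmap_inl, if_neg hα]) (fun k => Gmap_inr k) i j

lemma FG : (aeval (Fmap K r D n)).comp (aeval (Gmap K r D n)) =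
    AlgHom.id K (MvPolynomial (Big r D n) K) := by
  apply MvPolynomial.algHom_ext
  intro s
  rw [AlgHom.comp_apply, AlgHom.id_apply, aeval_X]
  rcases s with ⟨α, i, j⟩ | k
  · rcases eq_or_ne α (a0 r D) with rfl | hα
    · rw [Gmap_inl, if_pos rfl, map_add, aeval_X, Fmap_inl, if_pos rfl,
        aeval_Fmap_Epoly]
      ring
    · rw [Gmap_inl, if_neg hα, aeval_X, Fmap_inl, if_neg hα]
  · rw [Gmap_inr, aeval_X, Fmap_inr]

lemma GF : (aeval (Gmap K r D n)).comp (aeval (Fmap K r D n)) =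
    AlgHom.id K (MvPolynomial (Big r D n) K) := by
  apply MvPolynomial.algHom_ext
  intro s
  rw [AlgHom.comp_apply, AlgHom.id_apply, aeval_X]
  rcases s with ⟨α, i, j⟩ | k
  · rcases eq_or_ne α (a0 r D) with rfl | hα
    · rw [Fmap_inl, if_pos rfl, map_sub, aeval_X, Gmap_inl, if_pos rfl,
        aeval_Gmap_Epoly]
      ring
    · rw [Fmap_inl, if_neg hα, aeval_X, Gmap_inl, if_neg hα]
  · rw [Fmap_inr, aeval_X, Gmap_inr]

noncomputable def psi (K : Type*) [Field K] (r D n : ℕ) :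
    MvPolynomial (Big r D n) K ≃ₐ[K] MvPolynomial (Big r D n) K :=
  AlgEquiv.ofAlgHom (aeval (Fmap K r D n)) (aeval (Gmap K r D n)) FG GF

lemma aeval_Fmap_entry (i j : Fin n) :
    aeval (Fmap K r D n) (∑ α : MIdx r D, X (Sum.inl (α, i, j)) * xp K α) =
      X (Sum.inl (a0 r D, i, j)) := by
  have hM : (∑ α : MIdx r D, X (Sum.inl (α, i, j)) * xp K α) =
      X (Sum.inl (a0 r D, i, j)) + Epoly K r D n i j := by
    rw [Epoly, ← Finset.add_sum_erase _ _ (Finset.mem_univ (a0 r D)), xp_a0, mul_one]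
  rw [hM, map_add, aeval_X, Fmap_inl, if_pos rfl, aeval_Fmap_Epoly]
  ring

lemma psi_apply (p : MvPolynomial (Big r D n) K) :
    psi K r D n p = aeval (Fmap K r D n) p := rfl

lemma prime_rename_of_prime {τ : Type*} {h : (Fin n × Fin n) → τ}
    (hinj : Function.Injective h) {p : MvPolynomial (Fin n × Fin n) K} (hp : Prime p) :
    Prime (rename h p) := by
  classical
  let e := Equiv.ofInjective h hinj
  have h1 : Prime ((renameEquiv K e) p) :=
    (MulEquiv.prime_iff (renameEquiv K e).toMulEquiv).mpr hp
  have h2 : Prime (rename (Subtype.val : Set.range h → τ) ((renameEquiv K e) p)) :=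
    (MvPolynomial.prime_rename_iff (Set.range h)).mpr h1
  rw [renameEquiv_apply, rename_rename] at h2
  convert h2 using 2
  rfl

theorem stmt8' {K : Type*} [Field K] {n r D : ℕ} (hn : 1 ≤ n) (hr : 1 ≤ r) :
    Irreducible
      (Matrix.det (Matrix.of fun i j : Fin n =>
        (∑ α : MIdx r D,
          MvPolynomial.X (Sum.inl (α, i, j)) *
            ∏ k : Fin r, MvPolynomial.X (Sum.inr k) ^ (α.1 k : ℕ) :
          MvPolynomial ((MIdx r D × Fin n × Fin n) ⊕ Fin r) K))) := by
  classical
  have hprime_gd : Prime (gd K n) :=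
    (UniqueFactorizationMonoid.irreducible_iff_prime).mp (gd_irreducible hn)
  set h : (Fin n × Fin n) → Big r D n := fun p => Sum.inl (a0 r D, p.1, p.2) with hh
  have hinj : Function.Injective h := by
    intro a b hab
    simp only [hh, Sum.inl.injEq, Prod.mk.injEq, true_and] at hab
    exact Prod.ext hab.1 hab.2
  have hprime : Prime (rename h (gd K n)) := prime_rename_of_prime hinj hprime_gd
  set M : Matrix (Fin n) (Fin n) (MvPolynomial (Big r D n) K) :=
    Matrix.of fun i j : Fin n => ∑ α : MIdx r D, X (Sum.inl (α, i, j)) * xp K α with hM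
  have hdet : aeval (Fmap K r D n) (Matrix.det M) = rename h (gd K n) := by
    rw [(aeval (Fmap K r D n)).map_det, gd, (rename h : MvPolynomial (Fin n × Fin n) K →ₐ[K] _).map_det]
    congr 1
    apply Matrix.ext
    intro i j
    rw [AlgHom.mapMatrix_apply, AlgHom.mapMatrix_apply, Matrix.map_apply, Matrix.map_apply,
      Matrix.of_apply, rename_X]
    exact aeval_Fmap_entry i j
  have hprime2 : Prime (Matrix.det M) := by
    rw [← MulEquiv.prime_iff (psi K r D n).toRingEquiv.toMulEquiv]
    show Prime (psi K r D n (Matrix.det M))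
    rw [psi_apply, hdet]
    exact hprime
  exact hprime2.irreducible

end Stmt8Aux

/-- let `S` be the polynomial ring over a field `K` in the
variables `c_{α,i,j}` (`|α| ≤ D`, `1 ≤ i,j ≤ n`) together with `x₁,…,x_r`,
and let `M` be the `n×n` matrix over `S` with `(i,j)` entry
`Σ_{|α| ≤ D} c_{α,i,j}·x^α`.  Then `det M` is irreducible in `S`. -/
theorem stmt8 {K : Type*} [Field K] {n r D : ℕ} (hn : 1 ≤ n) (hr : 1 ≤ r) :
    Irreducible
      (Matrix.det (Matrix.of fun i j : Fin n =>
        (∑ α : MIdx r D,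
          MvPolynomial.X (Sum.inl (α, i, j)) *
            ∏ k : Fin r, MvPolynomial.X (Sum.inr k) ^ (α.1 k : ℕ) :
          MvPolynomial ((MIdx r D × Fin n × Fin n) ⊕ Fin r) K))) :=
  Stmt8Aux.stmt8' hn hr
end

section
/- Let K be a field, R = K[x₁,…,x_r] with r ≥ 1, m ≥ n ≥ 1, and G ∈ R^{n×1}. For every F ∈ R^{m×1} whose entries generate the same ideal of R as the entries of G, there exist an integer D ≥ 0 and matrices A ∈ R^{m×n} and B ∈ R^{n×m}, all of whose entries have total degree at most D, such that F = A·G, (B·A − E_n)·G = O_{n×1}, and all entries of B₁·A₁ have total degree at most D (B₁ the first n columns of B, A₁ the first n rows of A). In other words, the set of generating systems of ⟨G⟩ of length m is the increasing union over D of the sets F̃_{≤D} = { A·G : there exists B with (B,A) as above }. -/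
set_option maxHeartbeats 1000000


/-- `R = K[x₁,…,x_r]`, `m ≥ n ≥ 1`, `G ∈ R^{n×1}`.  Every
`F ∈ R^{m×1}` whose entries generate the same ideal as the entries of `G` can
be written `F = A·G` with `(B·A − E_n)·G = 0` for matrices `A ∈ R^{m×n}`,
`B ∈ R^{n×m}` all of whose entries have total degree ≤ `D` for some `D ≥ 0`,
with moreover all entries of `B₁·A₁` of total degree ≤ `D`. -/
theorem stmt15 {K : Type*} [Field K] {r m n : ℕ} (hr : 1 ≤ r) (hn : 1 ≤ n)
    (hnm : n ≤ m)
    (G : Matrix (Fin n) (Fin 1) (MvPolynomial (Fin r) K))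
    (F : Matrix (Fin m) (Fin 1) (MvPolynomial (Fin r) K))
    (hF : Ideal.span (Set.range fun i => F i 0) =
      Ideal.span (Set.range fun i => G i 0)) :
    ∃ (D : ℕ) (A : Matrix (Fin m) (Fin n) (MvPolynomial (Fin r) K))
      (B : Matrix (Fin n) (Fin m) (MvPolynomial (Fin r) K)),
      (∀ i j, ((A i j).totalDegree ≤ D)) ∧
      (∀ i j, ((B i j).totalDegree ≤ D)) ∧
      F = A * G ∧
      (B * A - 1) * G = 0 ∧
      (∀ i j, (((colsLeft B hnm * rowsTop A hnm) i j).totalDegree ≤ D)) := by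

  have hFG : ∀ i, F i 0 ∈ Ideal.span (Set.range fun j => G j 0) := by
    intro i; rw [← hF]; exact Ideal.subset_span ⟨i, rfl⟩
  have hGF : ∀ j, G j 0 ∈ Ideal.span (Set.range fun i => F i 0) := by
    intro j; rw [hF]; exact Ideal.subset_span ⟨j, rfl⟩
  choose a ha using fun i => (Ideal.mem_span_range_iff_exists_fun).mp (hFG i)
  choose b hb using fun j => (Ideal.mem_span_range_iff_exists_fun).mp (hGF j)
  set A : Matrix (Fin m) (Fin n) (MvPolynomial (Fin r) K) := Matrix.of a with hA
  set B : Matrix (Fin n) (Fin m) (MvPolynomial (Fin r) K) := Matrix.of b with hB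
  have hFA : F = A * G := by
    refine Matrix.ext fun i j => ?_
    have hj : j = 0 := Subsingleton.elim _ _
    subst hj
    rw [Matrix.mul_apply]
    exact (ha i).symm
  have hGB : B * F = G := by
    refine Matrix.ext fun i j => ?_
    have hj : j = 0 := Subsingleton.elim _ _
    subst hj
    rw [Matrix.mul_apply]
    exact hb i
  refine ⟨(Finset.univ.sup fun p : Fin m × Fin n => (A p.1 p.2).totalDegree) ⊔
      (Finset.univ.sup fun p : Fin n × Fin m => (B p.1 p.2).totalDegree) ⊔
      (Finset.univ.sup fun p : Fin n × Fin n =>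
        (((colsLeft B hnm * rowsTop A hnm)) p.1 p.2).totalDegree),
    A, B, ?_, ?_, hFA, ?_, ?_⟩
  · intro i j
    exact le_trans (Finset.le_sup (f := fun p : Fin m × Fin n => (A p.1 p.2).totalDegree)
      (Finset.mem_univ (i, j))) (le_sup_of_le_left le_sup_left)
  · intro i j
    exact le_trans (Finset.le_sup (f := fun p : Fin n × Fin m => (B p.1 p.2).totalDegree)
      (Finset.mem_univ (i, j))) (le_sup_of_le_left le_sup_right)
  · rw [Matrix.sub_mul, Matrix.mul_assoc, ← hFA, hGB, Matrix.one_mul, sub_self]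
  · intro i j
    refine le_trans ?_ le_sup_right
    have h := Finset.le_sup (f := fun p : Fin n × Fin n =>
      (((colsLeft B hnm * rowsTop A hnm)) p.1 p.2).totalDegree)
      (Finset.mem_univ (i, j))
    exact h
end
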